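/- Let (N,v) be a simple monotone game with n = |N|, let η ∈ N be a null player and let S ⊆ N\{η} with s = |S| ≥ 2. Then the Shapley-Owen coopetition index satisfies |C_SO(S∪{η})| ≤ (1 − 2/(s·(s+1)))·|C_SO(S)|. -/

import Mathlib

open Finset

variable {α : Type*} [DecidableEq α]

/-- A simple monotone game on the player set `N`: `v` maps coalitions to `{0,1}`,
`v ∅ = 0`, `v N = 1`, and `v` is monotone on subsets of `N`. -/
structure SimpleGame (N : Finset α) (v : Finset α → ℝ) : Prop where
  empty : v ∅ = 0
  full : v N = 1
  mono : ∀ ⦃S T : Finset α⦄, S ⊆ T → T ⊆ N → v S ≤ v T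
  binary : ∀ S ⊆ N, v S = 0 ∨ v S = 1

/-- Block interaction indicator `BI v {S₁,S₂} T = v(S₁∪S₂∪T) − v(S₁∪T) − v(S₂∪T) + v(T)`. -/
noncomputable def BI (v : Finset α → ℝ) (π : Sym2 (Finset α)) (T : Finset α) : ℝ :=
  Sym2.lift ⟨fun A B => v (A ∪ B ∪ T) - v (A ∪ T) - v (B ∪ T) + v T,
    fun A B => by simp only []; rw [Finset.union_comm A B]; ring⟩ π

/-- `Π₂(S)`: the set of unordered partitions of `S` into two nonempty parts. -/
def Pi2 (S : Finset α) : Finset (Sym2 (Finset α)) :=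
  (S.powerset.filter fun Q => Q ≠ ∅ ∧ Q ≠ S).image fun Q => s(Q, S \ Q)

/-- `S` is critical with respect to `T`: `v(S∪T) − v(T) = 1`. -/
def Critical (v : Finset α → ℝ) (S T : Finset α) : Prop := v (S ∪ T) - v T = 1

/-- `S` is essential critical with respect to `T`: `S` is critical wrt `T` and no
proper nonempty subset of `S` is critical wrt `T`. -/
def EssentialCritical (v : Finset α → ℝ) (S T : Finset α) : Prop :=
  Critical v S T ∧ ∀ S' : Finset α, S' ⊂ S → S'.Nonempty → ¬ Critical v S' T

/-- The attitude `A_p(S,T)` of `S` towards `T` under the distribution `p` on `Π₂(S)`. -/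
noncomputable def attitude (v : Finset α → ℝ) (p : Sym2 (Finset α) → ℝ)
    (S T : Finset α) : ℝ :=
  ∑ π ∈ Pi2 S, p π * BI v π T

/-- The coopetition index `C_{p,q}(S)`. -/
noncomputable def coop (N : Finset α) (v : Finset α → ℝ)
    (p : Sym2 (Finset α) → ℝ) (q : Finset α → ℝ) (S : Finset α) : ℝ :=
  ∑ T ∈ (N \ S).powerset, q T * attitude v p S T

/-- `Σ_S(N)`: orderings of `N` (as lists) in which the elements of `S` occupy
consecutive positions. -/
noncomputable def SigmaOrd (N S : Finset α) : Finset (List α) := by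
  classical
  exact N.toList.permutations.toFinset.filter
    fun l => ∃ k ∈ Finset.range (l.length + 1), ((l.drop k).take S.card).toFinset = S

/-- Sequential attitude `AS(S,σ)` of `S` towards the ordering `l`:
the average over `k = 1, …, s−1` of the block interaction between the first `k` and the
last `s−k` elements of the block of `S` in `l`, against the predecessors of `S` in `l`. -/
noncomputable def seqAttitude (v : Finset α → ℝ) (S : Finset α) (l : List α) : ℝ :=
  (1 / ((S.card : ℝ) - 1)) * ∑ k ∈ Finset.Icc 1 (S.card - 1),
    BI v (s((((l.dropWhile fun x => decide (x ∉ S)).take S.card).take k).toFinset,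
            (((l.dropWhile fun x => decide (x ∉ S)).take S.card).drop k).toFinset))
      (l.takeWhile fun x => decide (x ∉ S)).toFinset

/-- Shapley-Owen coopetition index defined through orderings. -/
noncomputable def C_SO_ord (N : Finset α) (v : Finset α → ℝ) (S : Finset α) : ℝ :=
  (1 / ((SigmaOrd N S).card : ℝ)) * ∑ l ∈ SigmaOrd N S, seqAttitude v S l

/-- Shapley-Owen weight on partitions `{Q, S\Q}`: `2·q!·(s−q)!/((s−1)·s!)`. -/
noncomputable def soWeight (S : Finset α) : Sym2 (Finset α) → ℝ :=
  Sym2.lift ⟨fun A B => (2 * A.card.factorial * B.card.factorial : ℝ) /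
      (((S.card : ℝ) - 1) * (S.card.factorial : ℝ)),
    fun A B => by simp only []; ring⟩

/-- Shapley-Owen weight on external coalitions: `t!·(n−s−t)!/(n−s+1)!`. -/
noncomputable def soExt (N S T : Finset α) : ℝ :=
  (T.card.factorial * (N.card - S.card - T.card).factorial : ℝ) /
    ((N.card - S.card + 1).factorial : ℝ)

/-- Shapley-Owen coopetition index (closed formula). -/
noncomputable def C_SO (N : Finset α) (v : Finset α → ℝ) (S : Finset α) : ℝ :=
  ∑ T ∈ (N \ S).powerset, soExt N S T * ∑ π ∈ Pi2 S, soWeight S π * BI v π T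

/-- Banzhaf coopetition index. -/
noncomputable def C_Bz (N : Finset α) (v : Finset α → ℝ) (S : Finset α) : ℝ :=
  (1 / ((2 : ℝ) ^ (N.card - S.card) * ((2 : ℝ) ^ (S.card - 1) - 1))) *
    ∑ T ∈ (N \ S).powerset, ∑ π ∈ Pi2 S, BI v π T

/-- Decisiveness index `D_{p,q}(S)`. -/
noncomputable def decis (N : Finset α) (v : Finset α → ℝ)
    (p : Sym2 (Finset α) → ℝ) (q : Finset α → ℝ) (S : Finset α) : ℝ :=
  ∑ T ∈ (N \ S).powerset, q T * ∑ π ∈ Pi2 S, p π * |BI v π T|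

/-- Banzhaf decisiveness index. -/
noncomputable def D_Bz (N : Finset α) (v : Finset α → ℝ) (S : Finset α) : ℝ :=
  (1 / ((2 : ℝ) ^ (N.card - S.card) * ((2 : ℝ) ^ (S.card - 1) - 1))) *
    ∑ T ∈ (N \ S).powerset, ∑ π ∈ Pi2 S, |BI v π T|

/-- Shapley-Owen decisiveness index. -/
noncomputable def D_SO (N : Finset α) (v : Finset α → ℝ) (S : Finset α) : ℝ :=
  ∑ T ∈ (N \ S).powerset, soExt N S T * ∑ π ∈ Pi2 S, soWeight S π * |BI v π T|

/-- The apex game on `N` with apex player `a`. -/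
noncomputable def apexGame (N : Finset α) (a : α) : Finset α → ℝ :=
  fun S => if (a ∈ S ∧ (S \ {a}).Nonempty) ∨ S = N \ {a} then 1 else 0

/-! A null player changes no block interaction, so the sums defining `C_SO (S ∪ {η})` and
`C_SO S` can be matched term by term: an outside coalition `T` of `S ∪ {η}` is paired with
the two outside coalitions `T` and `T ∪ {η}` of `S`, and a split `{Q, S \ Q}` of `S` with the
two splits `{Q ∪ {η}, S \ Q}` and `{Q, (S \ Q) ∪ {η}}` of `S ∪ {η}`. The two external weights
of `S` add up to the external weight of `S ∪ {η}` (a Shapley-type recursion), and the two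
internal weights of `S ∪ {η}` add up to `1 - 2 / (s (s + 1))` times the internal weight of
`S`. So in fact `C_SO (S ∪ {η}) = (1 - 2 / (s (s + 1))) * C_SO S`. -/

section

variable {N S T : Finset α} {v : Finset α → ℝ} {η : α}

omit [DecidableEq α] in
lemma soWeight_mk (S A B : Finset α) :
    soWeight S s(A, B) = (2 * A.card.factorial * B.card.factorial : ℝ) /
      (((S.card : ℝ) - 1) * (S.card.factorial : ℝ)) := rfl

lemma BI_mk (v : Finset α → ℝ) (A B T : Finset α) :
    BI v s(A, B) T = v (A ∪ B ∪ T) - v (A ∪ T) - v (B ∪ T) + v T := rfl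

lemma BI_empty_left (v : Finset α → ℝ) (B T : Finset α) : BI v s(∅, B) T = 0 := by
  simp [BI_mk]

lemma sum_Pi2 (S : Finset α) (f : Sym2 (Finset α) → ℝ) :
    ∑ π ∈ Pi2 S, f π = (1 / 2) * ∑ Q ∈ S.powerset with Q ≠ ∅ ∧ Q ≠ S, f s(Q, S \ Q) := by
  rw [Pi2, mul_sum]
  refine sum_image' _ fun Q hQ => ?_
  obtain ⟨hQS, hQ0, hQS'⟩ : Q ⊆ S ∧ Q ≠ ∅ ∧ Q ≠ S := by simpa using hQ
  have hcompl : S \ (S \ Q) = Q := Finset.sdiff_sdiff_eq_self hQS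
  have hne : Q ≠ S \ Q := fun h => by
    obtain ⟨a, ha⟩ := nonempty_iff_ne_empty.2 hQ0
    exact (mem_sdiff.1 (h ▸ ha)).2 ha
  have hfiber : ({R ∈ S.powerset | R ≠ ∅ ∧ R ≠ S}.filter
      fun R => s(R, S \ R) = s(Q, S \ Q)) = {Q, S \ Q} := by
    ext R
    simp only [mem_filter, mem_powerset, mem_insert, mem_singleton, Sym2.eq_iff]
    constructor
    · rintro ⟨-, ⟨h, -⟩ | ⟨h, -⟩⟩ <;> simp [h]
    · rintro (rfl | rfl)
      · exact ⟨⟨hQS, hQ0, hQS'⟩, Or.inl ⟨rfl, rfl⟩⟩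
      · refine ⟨⟨sdiff_subset, ?_, ?_⟩, Or.inr ⟨rfl, hcompl⟩⟩
        · rw [Ne, sdiff_eq_empty_iff_subset]
          exact fun h => hQS' (hQS.antisymm h)
        · exact fun h => hQ0 (by rw [← hcompl, h, Finset.sdiff_self])
  rw [hfiber, sum_pair hne, hcompl, Sym2.eq_swap]
  ring

lemma attitude_eq_sum_powerset (v : Finset α → ℝ) (p : Sym2 (Finset α) → ℝ) (S T : Finset α) :
    attitude v p S T = (1 / 2) * ∑ Q ∈ S.powerset, p s(Q, S \ Q) * BI v s(Q, S \ Q) T := by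
  rw [attitude, sum_Pi2]
  congr 1
  refine sum_filter_of_ne fun Q _ hQ => ⟨?_, ?_⟩ <;> rintro rfl <;> apply hQ
  · rw [BI_empty_left, mul_zero]
  · rw [Finset.sdiff_self, Sym2.eq_swap, BI_empty_left, mul_zero]

lemma eq_erase_of_null (hnull : ∀ T ⊆ N \ {η}, v (T ∪ {η}) - v T = 0) {X : Finset α}
    (hX : X ⊆ N) : v X = v (X.erase η) := by
  by_cases hηX : η ∈ X
  · have hsub : X.erase η ⊆ N \ {η} := by
      rw [← sdiff_singleton_eq_erase]; exact sdiff_subset_sdiff hX le_rfl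
    rw [← sub_eq_zero, ← hnull _ hsub, union_singleton, insert_erase hηX]
  · rw [erase_eq_of_notMem hηX]

lemma BI_eq_BI_erase (hnull : ∀ X ⊆ N, v X = v (X.erase η)) {A B T : Finset α}
    (hA : A ⊆ N) (hB : B ⊆ N) (hT : T ⊆ N) :
    BI v s(A, B) T = BI v s(A.erase η, B.erase η) (T.erase η) := by
  simp only [BI_mk, hnull _ (union_subset (union_subset hA hB) hT), hnull _ (union_subset hA hT),
    hnull _ (union_subset hB hT), hnull _ hT, erase_union_distrib]

lemma factorial_weight_add (t m : ℕ) :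
    (t.factorial * (m + 1).factorial : ℝ) / (t + m + 2).factorial +
      ((t + 1).factorial * m.factorial : ℝ) / (t + m + 2).factorial =
      (t.factorial * m.factorial : ℝ) / (t + m + 1).factorial := by
  rw [show t + m + 2 = (t + m + 1) + 1 by ring, Nat.factorial_succ (t + m + 1),
    Nat.factorial_succ t, Nat.factorial_succ m]
  push_cast
  field_simp
  ring

lemma soExt_add_soExt_insert (hηN : η ∈ N) (hSN : S ⊆ N) (hηS : η ∉ S)
    (hT : T ⊆ N \ insert η S) :
    soExt N S T + soExt N S (insert η T) = soExt N (insert η S) T := by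
  have hηT : η ∉ T := fun h => (mem_sdiff.1 (hT h)).2 (mem_insert_self η S)
  have hcard : (insert η S).card + T.card ≤ N.card := by
    have := card_le_card hT
    rw [card_sdiff_of_subset (insert_subset hηN hSN)] at this
    have := card_le_card (insert_subset hηN hSN)
    omega
  rw [card_insert_of_notMem hηS] at hcard
  obtain ⟨m, hm⟩ : ∃ m, N.card = S.card + 1 + T.card + m := ⟨_, (Nat.add_sub_of_le hcard).symm⟩
  simp only [soExt, card_insert_of_notMem hηS, card_insert_of_notMem hηT, hm]
  rw [show S.card + 1 + T.card + m - S.card - T.card = m + 1 by omega,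
    show S.card + 1 + T.card + m - S.card - (T.card + 1) = m by omega,
    show S.card + 1 + T.card + m - S.card + 1 = T.card + m + 2 by omega,
    show S.card + 1 + T.card + m - (S.card + 1) - T.card = m by omega,
    show S.card + 1 + T.card + m - (S.card + 1) + 1 = T.card + m + 1 by omega]
  exact factorial_weight_add T.card m

lemma factorial_pair_weight_add {q b : ℕ} (hs : 2 ≤ q + b) :
    (2 * q.factorial * (b + 1).factorial : ℝ) / (((q + b + 1 : ℕ) - 1) * (q + b + 1).factorial) +
      (2 * (q + 1).factorial * b.factorial : ℝ) / (((q + b + 1 : ℕ) - 1) * (q + b + 1).factorial) =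
      (1 - 2 / ((q + b : ℕ) * ((q + b : ℕ) + 1))) *
        ((2 * q.factorial * b.factorial : ℝ) / (((q + b : ℕ) - 1) * (q + b).factorial)) := by
  have hs' : (2 : ℝ) ≤ q + b := by exact_mod_cast hs
  have h1 : (q + b - 1 : ℝ) ≠ 0 := by linarith
  have h2 : (q + b : ℝ) ≠ 0 := by linarith
  rw [Nat.factorial_succ (q + b), Nat.factorial_succ q, Nat.factorial_succ b]
  push_cast
  rw [add_sub_cancel_right]
  field_simp
  ring

lemma soWeight_insert_add (hηS : η ∉ S) {Q : Finset α} (hQ : Q ⊆ S) (hs : 2 ≤ S.card) :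
    soWeight (insert η S) s(Q, insert η (S \ Q)) + soWeight (insert η S) s(insert η Q, S \ Q) =
      (1 - 2 / ((S.card : ℝ) * ((S.card : ℝ) + 1))) * soWeight S s(Q, S \ Q) := by
  have hcard : Q.card + (S \ Q).card = S.card := by
    rw [add_comm, card_sdiff_add_card_eq_card hQ]
  simp only [soWeight_mk, card_insert_of_notMem hηS, card_insert_of_notMem (fun h => hηS (hQ h)),
    card_insert_of_notMem (fun h => hηS (mem_sdiff.1 h).1), ← hcard]
  exact factorial_pair_weight_add (hcard ▸ hs)

lemma attitude_insert_right_of_null (hnull : ∀ X ⊆ N, v X = v (X.erase η)) (hηN : η ∈ N)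
    (p : Sym2 (Finset α) → ℝ) (hSN : S ⊆ N) (hTN : T ⊆ N) :
    attitude v p S (insert η T) = attitude v p S T := by
  simp only [attitude_eq_sum_powerset]
  congr 1
  refine sum_congr rfl fun Q hQ => ?_
  have hQN : Q ⊆ N := (mem_powerset.1 hQ).trans hSN
  rw [BI_eq_BI_erase hnull hQN (sdiff_subset.trans hSN) (insert_subset hηN hTN),
    BI_eq_BI_erase hnull hQN (sdiff_subset.trans hSN) hTN, erase_insert_eq_erase]

lemma attitude_insert_of_null (hnull : ∀ X ⊆ N, v X = v (X.erase η)) (hηN : η ∈ N)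
    (hηS : η ∉ S) (hSN : S ⊆ N) (hTN : T ⊆ N) (hs : 2 ≤ S.card) :
    attitude v (soWeight (insert η S)) (insert η S) T =
      (1 - 2 / ((S.card : ℝ) * ((S.card : ℝ) + 1))) * attitude v (soWeight S) S T := by
  simp only [attitude_eq_sum_powerset]
  rw [sum_powerset_insert hηS, ← sum_add_distrib, mul_sum, mul_sum, mul_sum]
  refine sum_congr rfl fun Q hQ => ?_
  rw [mem_powerset] at hQ
  have hQN : Q ⊆ N := hQ.trans hSN
  have hQcN : S \ Q ⊆ N := sdiff_subset.trans hSN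
  rw [insert_sdiff_of_notMem _ (fun h => hηS (hQ h)), insert_sdiff_insert,
    sdiff_insert_of_notMem hηS,
    BI_eq_BI_erase hnull hQN (insert_subset hηN hQcN) hTN,
    BI_eq_BI_erase hnull (insert_subset hηN hQN) hQcN hTN, erase_insert_eq_erase,
    erase_insert_eq_erase, ← BI_eq_BI_erase hnull hQN hQcN hTN, ← add_mul,
    soWeight_insert_add hηS hQ hs]
  ring

lemma C_SO_eq_sum_attitude (N : Finset α) (v : Finset α → ℝ) (S : Finset α) :
    C_SO N v S = ∑ T ∈ (N \ S).powerset, soExt N S T * attitude v (soWeight S) S T := rfl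

lemma C_SO_insert_of_null (hnull : ∀ X ⊆ N, v X = v (X.erase η)) (hηN : η ∈ N)
    (hηS : η ∉ S) (hSN : S ⊆ N) (hs : 2 ≤ S.card) :
    C_SO N v (insert η S) = (1 - 2 / ((S.card : ℝ) * ((S.card : ℝ) + 1))) * C_SO N v S := by
  have hcompl : N \ S = insert η (N \ insert η S) := by
    rw [sdiff_insert, insert_erase (mem_sdiff.2 ⟨hηN, hηS⟩)]
  rw [C_SO_eq_sum_attitude, C_SO_eq_sum_attitude, hcompl,
    sum_powerset_insert (by simp), ← sum_add_distrib, mul_sum]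
  refine sum_congr rfl fun T hT => ?_
  have hT' : T ⊆ N \ insert η S := mem_powerset.1 hT
  have hTN : T ⊆ N := hT'.trans sdiff_subset
  rw [attitude_insert_right_of_null hnull hηN _ hSN hTN,
    attitude_insert_of_null hnull hηN hηS hSN hTN hs,
    ← soExt_add_soExt_insert hηN hSN hηS hT']
  ring

end

theorem statement9_general (N : Finset α) (v : Finset α → ℝ)
    (η : α) (hη : η ∈ N) (hnull : ∀ T ⊆ N \ {η}, v (T ∪ {η}) - v T = 0)
    (S : Finset α) (hS : S ⊆ N \ {η}) (hs : 2 ≤ S.card) :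
    |C_SO N v (S ∪ {η})| ≤
      (1 - 2 / ((S.card : ℝ) * ((S.card : ℝ) + 1))) * |C_SO N v S| := by
  have hηS : η ∉ S := fun h => (mem_sdiff.1 (hS h)).2 (mem_singleton_self η)
  have hratio : 0 ≤ 1 - 2 / ((S.card : ℝ) * ((S.card : ℝ) + 1)) := by
    have : (2 : ℝ) ≤ S.card := by exact_mod_cast hs
    rw [sub_nonneg, div_le_one (by positivity)]
    nlinarith
  rw [union_singleton, C_SO_insert_of_null (fun X => eq_erase_of_null hnull) hη hηS
    (hS.trans sdiff_subset) hs, abs_mul, abs_of_nonneg hratio]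

/-- adding a null player `η` to `S` dilutes the Shapley-Owen coopetition
index: `|C_SO(S ∪ {η})| ≤ (1 − 2/(s(s+1)))·|C_SO(S)|`. -/
theorem statement9 (N : Finset α) (v : Finset α → ℝ) (hv : SimpleGame N v)
    (η : α) (hη : η ∈ N) (hnull : ∀ T ⊆ N \ {η}, v (T ∪ {η}) - v T = 0)
    (S : Finset α) (hS : S ⊆ N \ {η}) (hs : 2 ≤ S.card) :
    |C_SO N v (S ∪ {η})| ≤
      (1 - 2 / ((S.card : ℝ) * ((S.card : ℝ) + 1))) * |C_SO N v S| :=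
  statement9_general N v η hη hnull S hS hs
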